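/- arXiv:1805.02468 — 2 statements merged into one kernel-verified Lean document; each statement's English description precedes it below -/
import Mathlib

section
/- If u : ℝ → ℓ²(ℤ) is a C¹ solution of i u'(t) = Δu(t) + ν|u(t)|²u(t) with ν ∈ {−1,1}, then the Hamiltonian H(u) = (1/2) Σ_g |u_{g+1} − u_g|² − (ν/4) Σ_g |u_g|⁴ is conserved: H(u(t)) = H(u(0)) for all t. -/
/-!
Let `S` be the unit shift of `ℓ²(ℤ)` and `D = S - 1`, so that `H(v) = ½‖Dv‖² - (ν/4)‖v ⊙ v‖²`
with `⊙` the pointwise product, a bounded bilinear map on `ℓ²`. Along a solution,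
`d/dt H(u) = Re ⟪Du, Du'⟫ - ν Re ⟪u ⊙ u, u ⊙ u'⟫ = Re ⟪(2 - S - S⁻¹) u - ν ū ⊙ u ⊙ u, u'⟫`,
using that `S` is unitary and that multiplication by `u` is adjoint to multiplication by `ū`.
By the equation the vector on the left is `-i u'`, and `Re ⟪-i u', u'⟫ = Re (i ‖u'‖²) = 0`.
-/

noncomputable section

/-- The Hilbert space `ℓ²(ℤ)`. -/
abbrev H : Type := lp (fun _ : ℤ => ℂ) 2

/-- The Hamiltonian of DNLS: `H(u) = (1/2) Σ_g |u_{g+1} - u_g|² - (ν/4) Σ_g |u_g|⁴`. -/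
noncomputable def Ham (ν : ℝ) (v : H) : ℝ :=
  (1 / 2) * ∑' g : ℤ, ‖(v : ℤ → ℂ) (g + 1) - (v : ℤ → ℂ) g‖ ^ 2
    - (ν / 4) * ∑' g : ℤ, ‖(v : ℤ → ℂ) g‖ ^ 4

open scoped ENNReal InnerProductSpace

section Reindex
variable {α β E : Type*} [NormedAddCommGroup E] {p : ℝ≥0∞}

theorem Memℓp.comp_equiv {f : α → E} (hf : Memℓp f p) (e : β ≃ α) : Memℓp (f ∘ e) p := by
  obtain rfl | rfl | hp := p.trichotomy
  · rw [memℓp_zero_iff] at hf ⊢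
    exact hf.preimage e.injective.injOn
  · rw [memℓp_infty_iff] at hf ⊢
    rwa [← e.surjective.range_comp (fun i => ‖f i‖)] at hf
  · rw [memℓp_gen_iff hp] at hf ⊢
    exact e.summable_iff.2 hf

theorem lp.norm_comp_equiv [Fact (1 ≤ p)] (f : lp (fun _ : α => E) p) (e : β ≃ α) :
    ‖(⟨f ∘ e, (lp.memℓp f).comp_equiv e⟩ : lp (fun _ : β => E) p)‖ = ‖f‖ := by
  obtain rfl | rfl | hp := p.trichotomy
  · exact absurd (Fact.out : (1 : ℝ≥0∞) ≤ 0) (by norm_num)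
  · exact e.iSup_comp (g := fun i => ‖f i‖)
  · rw [lp.norm_eq_tsum_rpow hp, lp.norm_eq_tsum_rpow hp]
    exact congrArg (· ^ (1 / p.toReal)) (e.tsum_eq fun i => ‖f i‖ ^ p.toReal)

variable (𝕜 : Type*) [NormedField 𝕜] [NormedSpace 𝕜 E] [Fact (1 ≤ p)]

def lp.reindex (e : β ≃ α) : lp (fun _ : α => E) p ≃ₗᵢ[𝕜] lp (fun _ : β => E) p where
  toFun f := ⟨f ∘ e, (lp.memℓp f).comp_equiv e⟩
  invFun f := ⟨f ∘ e.symm, (lp.memℓp f).comp_equiv e.symm⟩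
  map_add' _ _ := rfl
  map_smul' _ _ := rfl
  left_inv f := lp.ext <| funext fun i => congrArg f (e.apply_symm_apply i)
  right_inv f := lp.ext <| funext fun i => congrArg f (e.symm_apply_apply i)
  norm_map' f := lp.norm_comp_equiv f e

end Reindex

theorem LinearIsometryEquiv.inner_map_sub_self {𝕜 E : Type*} [RCLike 𝕜] [NormedAddCommGroup E]
    [InnerProductSpace 𝕜 E] (S : E ≃ₗᵢ[𝕜] E) (u w : E) :
    ⟪S u - u, S w - w⟫_𝕜 = ⟪(2 : 𝕜) • u - S u - S.symm u, w⟫_𝕜 := by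
  simp only [inner_sub_left, inner_sub_right, inner_smul_left, S.inner_map_map,
    map_ofNat]
  rw [S.symm.inner_map_eq_flip, S.symm_symm]
  ring

/- Over `lp _ 2`, `HasDerivAt.norm_sq` would pick up the componentwise real inner product
`∑' i, re ⟪f i, g i⟫`, which is not definitionally `re ⟪f, g⟫_𝕜`. -/
theorem HasDerivAt.norm_sq_of_rclike (𝕜 : Type*) {E : Type*} [RCLike 𝕜] [NormedAddCommGroup E]
    [InnerProductSpace 𝕜 E] [NormedSpace ℝ E] {f : ℝ → E} {f' : E} {x : ℝ}
    (hf : HasDerivAt f f' x) :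
    HasDerivAt (fun t => ‖f t‖ ^ 2) (2 * RCLike.re ⟪f x, f'⟫_𝕜) x := by
  have h := RCLike.reCLM.hasFDerivAt.comp_hasDerivAt x (hf.inner 𝕜 hf)
  simp only [Function.comp_def, RCLike.reCLM_apply, inner_self_eq_norm_sq, map_add,
    inner_re_symm f'] at h
  exact h.congr_deriv (two_mul _).symm

theorem lp.norm_sq_eq_tsum {α : Type*} {E : α → Type*} [∀ i, NormedAddCommGroup (E i)]
    (f : lp E 2) : ‖f‖ ^ 2 = ∑' i, ‖f i‖ ^ 2 := by
  exact_mod_cast lp.norm_rpow_eq_tsum (p := 2) (by norm_num) f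

section PointwiseMul
variable {α 𝕜 : Type*} [RCLike 𝕜]

theorem lp.memℓp_mul (v w : lp (fun _ : α => 𝕜) 2) : Memℓp (⇑v * ⇑w) 2 :=
  ((lp.memℓp w).norm.const_mul ‖v‖).mono fun i => by
    simpa only [Pi.mul_apply, norm_mul] using
      mul_le_mul_of_nonneg_right (lp.norm_apply_le_norm two_ne_zero v i) (norm_nonneg (w i))

theorem lp.norm_mul_le (v w : lp (fun _ : α => 𝕜) 2) :
    ‖(⟨⇑v * ⇑w, lp.memℓp_mul v w⟩ : lp (fun _ : α => 𝕜) 2)‖ ≤ ‖v‖ * ‖w‖ := by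
  calc _ ≤ ‖(‖v‖ : 𝕜) • w‖ := lp.norm_mono two_ne_zero fun i => by
          simpa only [lp.coeFn_smul, Pi.smul_apply, Pi.mul_apply, norm_mul, norm_smul,
            RCLike.norm_ofReal, abs_norm] using
            mul_le_mul_of_nonneg_right (lp.norm_apply_le_norm two_ne_zero v i) (norm_nonneg (w i))
    _ = ‖v‖ * ‖w‖ := by rw [norm_smul, RCLike.norm_ofReal, abs_norm]

def lp.pointwiseMul :
    lp (fun _ : α => 𝕜) 2 →L[𝕜] lp (fun _ : α => 𝕜) 2 →L[𝕜] lp (fun _ : α => 𝕜) 2 :=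
  LinearMap.mkContinuous₂
    (LinearMap.mk₂ 𝕜 (fun v w => ⟨⇑v * ⇑w, lp.memℓp_mul v w⟩)
      (fun _ _ _ => lp.ext (funext fun _ => add_mul _ _ _))
      (fun c v w => lp.ext (funext fun i => smul_mul_assoc c (v i) (w i)))
      (fun _ _ _ => lp.ext (funext fun _ => mul_add _ _ _))
      (fun c v w => lp.ext (funext fun i => mul_smul_comm c (v i) (w i))))
    1 fun v w => (lp.norm_mul_le v w).trans_eq (by rw [one_mul])

@[simp] theorem lp.pointwiseMul_apply (v w : lp (fun _ : α => 𝕜) 2) (i : α) :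
    lp.pointwiseMul v w i = v i * w i := rfl

theorem lp.pointwiseMul_comm (v w : lp (fun _ : α => 𝕜) 2) :
    lp.pointwiseMul v w = lp.pointwiseMul w v :=
  lp.ext (funext fun _ => mul_comm _ _)

theorem lp.inner_pointwiseMul_right (a b c : lp (fun _ : α => 𝕜) 2) :
    ⟪a, lp.pointwiseMul b c⟫_𝕜 = ⟪lp.pointwiseMul (star b) a, c⟫_𝕜 := by
  simp only [lp.inner_eq_tsum, lp.pointwiseMul_apply, lp.star_apply, RCLike.inner_apply,
    map_mul, RCLike.star_def, RCLike.conj_conj]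
  exact tsum_congr fun i => by ring

end PointwiseMul

def latticeShift : H ≃ₗᵢ[ℂ] H := lp.reindex ℂ (Equiv.addRight 1)

@[simp] theorem latticeShift_apply (v : H) (g : ℤ) : latticeShift v g = v (g + 1) := rfl

@[simp] theorem latticeShift_symm_apply (v : H) (g : ℤ) : latticeShift.symm v g = v (g - 1) := rfl

theorem Ham_eq_norm_sq (ν : ℝ) (v : H) :
    Ham ν v = 1 / 2 * ‖latticeShift v - v‖ ^ 2 - ν / 4 * ‖lp.pointwiseMul v v‖ ^ 2 := by
  simp only [Ham, lp.norm_sq_eq_tsum, lp.coeFn_sub, Pi.sub_apply, latticeShift_apply,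
    lp.pointwiseMul_apply, ← sq, norm_pow]
  ring_nf

theorem hasDerivAt_Ham_comp (ν : ℝ) {u : ℝ → H} {u' : H} {t : ℝ} (hu : HasDerivAt u u' t) :
    HasDerivAt (fun s => Ham ν (u s))
      (RCLike.re ⟪latticeShift (u t) - u t, latticeShift u' - u'⟫_ℂ
        - ν * RCLike.re ⟪lp.pointwiseMul (u t) (u t), lp.pointwiseMul (u t) u'⟫_ℂ) t := by
  have hD : HasDerivAt (fun s => latticeShift (u s) - u s) (latticeShift u' - u') t :=
    ((latticeShift.toContinuousLinearEquiv : H →L[ℂ] H).restrictScalars ℝ).hasFDerivAt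
      |>.comp_hasDerivAt t hu |>.sub hu
  have hM : HasDerivAt (fun s => lp.pointwiseMul (u s) (u s))
      (lp.pointwiseMul (u t) u' + lp.pointwiseMul u' (u t)) t :=
    ((lp.pointwiseMul (α := ℤ) (𝕜 := ℂ)).bilinearRestrictScalars ℝ).hasDerivAt_of_bilinear
      (fun _ => hu) (fun _ => hu)
  simp only [Ham_eq_norm_sq]
  refine (((hD.norm_sq_of_rclike ℂ).const_mul (1 / 2)).sub
    ((hM.norm_sq_of_rclike ℂ).const_mul (ν / 4))).congr_deriv ?_
  rw [lp.pointwiseMul_comm u' (u t), inner_add_right, map_add]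
  ring

def IsDNLSVelocity (ν : ℝ) (v w : H) : Prop :=
  ∀ g : ℤ, Complex.I * w g = (v (g + 1) - 2 * v g + v (g - 1)) + ν * (‖v g‖ : ℂ) ^ 2 * v g

theorem IsDNLSVelocity.residual_eq {ν : ℝ} {v w : H} (h : IsDNLSVelocity ν v w) :
    (2 : ℂ) • v - latticeShift v - latticeShift.symm v
      - (ν : ℂ) • lp.pointwiseMul (star v) (lp.pointwiseMul v v) = -(Complex.I • w) := by
  refine lp.ext (funext fun g => ?_)
  have hcube : star (v g) * (v g * v g) = (‖v g‖ : ℂ) ^ 2 * v g := by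
    rw [← Complex.mul_conj', Complex.star_def]
    ring
  simp only [lp.coeFn_sub, lp.coeFn_smul, lp.coeFn_neg, Pi.sub_apply, Pi.smul_apply, Pi.neg_apply,
    smul_eq_mul, latticeShift_apply, latticeShift_symm_apply, lp.pointwiseMul_apply, lp.star_apply,
    hcube]
  linear_combination h g

theorem IsDNLSVelocity.energy_rate_eq_zero {ν : ℝ} {v w : H} (h : IsDNLSVelocity ν v w) :
    RCLike.re ⟪latticeShift v - v, latticeShift w - w⟫_ℂ
      - ν * RCLike.re ⟪lp.pointwiseMul v v, lp.pointwiseMul v w⟫_ℂ = 0 := by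
  rw [latticeShift.inner_map_sub_self, lp.inner_pointwiseMul_right]
  have hlin : ∀ a b : H, RCLike.re ⟪a, w⟫_ℂ - ν * RCLike.re ⟪b, w⟫_ℂ
      = RCLike.re ⟪a - (ν : ℂ) • b, w⟫_ℂ := fun a b => by
    simp
  rw [hlin, h.residual_eq, inner_neg_left, inner_smul_left,
    inner_self_eq_norm_sq_to_K]
  simp [← Complex.ofReal_pow]

theorem DNLS_energy_conservation_general (ν : ℝ)
    (u u' : ℝ → H) (hderiv : ∀ t, HasDerivAt u (u' t) t)
    (heq : ∀ (t : ℝ) (g : ℤ),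
      Complex.I * (u' t : ℤ → ℂ) g =
        ((u t : ℤ → ℂ) (g + 1) - 2 * (u t : ℤ → ℂ) g + (u t : ℤ → ℂ) (g - 1)) +
          ν * (‖(u t : ℤ → ℂ) g‖ : ℂ) ^ 2 * (u t : ℤ → ℂ) g) :
    ∀ t : ℝ, Ham ν (u t) = Ham ν (u 0) := by
  have hconst (t : ℝ) : HasDerivAt (fun s => Ham ν (u s)) 0 t :=
    (hasDerivAt_Ham_comp ν (hderiv t)).congr_deriv (IsDNLSVelocity.energy_rate_eq_zero (heq t))
  exact fun t => is_const_of_deriv_eq_zero (fun s => (hconst s).differentiableAt)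
    (fun s => (hconst s).deriv) t 0

/-- A `C¹` solution of the DNLS equation `i u' = Δu + ν|u|²u` conserves the Hamiltonian. -/
theorem DNLS_energy_conservation (ν : ℝ) (hν : ν = 1 ∨ ν = -1)
    (u u' : ℝ → H) (hu' : Continuous u') (hderiv : ∀ t, HasDerivAt u (u' t) t)
    (heq : ∀ (t : ℝ) (g : ℤ),
      Complex.I * (u' t : ℤ → ℂ) g =
        ((u t : ℤ → ℂ) (g + 1) - 2 * (u t : ℤ → ℂ) g + (u t : ℤ → ℂ) (g - 1)) +
          ν * (‖(u t : ℤ → ℂ) g‖ : ℂ) ^ 2 * (u t : ℤ → ℂ) g) :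
    ∀ t : ℝ, Ham ν (u t) = Ham ν (u 0) :=
  DNLS_energy_conservation_general ν u u' hderiv heq
end
end

section
/- Uniform H¹ bound for DNLS: there is a universal constant C > 0 such that for any ν ∈ {−1,1} and any C¹ solution u : ℝ → ℓ²(ℤ) of i u'(t) = Δu(t) + ν|u(t)|²u(t), one has for all t: ‖u(t)‖_{Ḣ¹(ℤ)} ≤ C(‖u(0)‖_{Ḣ¹(ℤ)} + ‖u(0)‖³_{ℓ²(ℤ)}). -/
/-!
Both the mass `‖u‖²` and the energy `½‖Su - u‖² - (ν/4)‖u‖⁴_{ℓ⁴}` (with `S` the shift) are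
conserved: writing the equation as `u' = -i Z(u)`, the energy has derivative `-Re⟪Z(u), u'⟫`,
which vanishes because `Re⟪z, -i z⟫ = 0`, and the mass has derivative `2 Re⟪u, u'⟫ = 2 Im⟪u, Z(u)⟫`,
which vanishes because `S` is unitary and `⟪u, |u|²u⟫ = ‖u‖⁴_{ℓ⁴}` is real.
Telescoping `|u_g|² - |u_{g+1}|²` from `g` to `+∞` and Cauchy–Schwarz give
`|u_g|² ≤ 2‖u‖ ‖Su - u‖`, hence `‖u‖⁴_{ℓ⁴} ≤ 2‖u‖³ ‖Su - u‖`. Plugged into the conservation laws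
with `|ν| ≤ 1`, this yields `x² ≤ a² + m³x + m³a` for `x = ‖Su(t) - u(t)‖`, `a = ‖Su(0) - u(0)‖`,
`m = ‖u(0)‖`, and therefore `x ≤ 2(a + m³)`.
-/

noncomputable section

open Filter Topology
open scoped InnerProductSpace ComplexConjugate

theorem lp.hasSum_norm_sq {α : Type*} {E : α → Type*} [∀ i, NormedAddCommGroup (E i)]
    (f : lp E 2) : HasSum (fun i => ‖f i‖ ^ 2) (‖f‖ ^ 2) := by
  simpa using lp.hasSum_norm (p := 2) (by norm_num) f

theorem lp.sqrt_tsum_norm_sq {α : Type*} {E : α → Type*} [∀ i, NormedAddCommGroup (E i)]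
    (f : lp E 2) : √(∑' i, ‖f i‖ ^ 2) = ‖f‖ := by
  rw [(lp.hasSum_norm_sq f).tsum_eq, Real.sqrt_sq (norm_nonneg f)]

theorem HasDerivAt.norm_sq_complex {F : Type*} [NormedAddCommGroup F] [InnerProductSpace ℂ F]
    {f : ℝ → F} {f' : F} {t : ℝ} (hf : HasDerivAt f f' t) :
    HasDerivAt (‖f ·‖ ^ 2) (2 * (⟪f t, f'⟫_ℂ).re) t := by
  -- `complexToReal` is not a global instance, to avoid a diamond on `PiLp`
  let := InnerProductSpace.complexToReal (G := F)
  simpa [real_inner_eq_re_inner] using hf.norm_sq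

theorem le_tsum_of_sub_add_one_le {a b : ℤ → ℝ} (ha : Summable a) (hb : Summable b)
    (hb0 : 0 ≤ b) (hab : ∀ h, a h - a (h + 1) ≤ b h) (g : ℤ) : a g ≤ ∑' h, b h := by
  have hinj : Function.Injective fun n : ℕ => g + n := fun m n h => by simpa using h
  have ha' : Tendsto (fun n : ℕ => a g - a (g + n)) atTop (𝓝 (a g)) := by
    simpa using tendsto_const_nhds.sub (ha.comp_injective hinj).tendsto_atTop_zero
  have hpartial (n : ℕ) : a g - a (g + n) ≤ ∑ k ∈ Finset.range n, b (g + k) := by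
    have := Finset.sum_range_sub' (fun k : ℕ => a (g + k)) n
    simp only [Nat.cast_zero, add_zero] at this
    rw [← this]
    exact Finset.sum_le_sum fun k _ => by simpa [add_assoc] using hab (g + k)
  calc a g ≤ ∑' n : ℕ, b (g + n) :=
        le_of_tendsto_of_tendsto' ha' (hb.comp_injective hinj).hasSum.tendsto_sum_nat hpartial
    _ ≤ ∑' h, b h := tsum_comp_le_tsum_of_inj hb hb0 hinj

theorem le_two_mul_add_of_sq_le {x a b : ℝ} (hx : 0 ≤ x) (ha : 0 ≤ a) (hb : 0 ≤ b)
    (h : x ^ 2 ≤ a ^ 2 + b * x + b * a) : x ≤ 2 * (a + b) := by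
  nlinarith

theorem Memℓp.comp_equiv_s19 {α β E : Type*} [NormedAddCommGroup E] {p : ENNReal} (hp : 0 < p.toReal)
    {f : α → E} (hf : Memℓp f p) (e : β ≃ α) : Memℓp (fun i => f (e i)) p :=
  (memℓp_gen_iff hp).2 (e.summable_iff.2 ((memℓp_gen_iff hp).1 hf))

namespace DNLS

theorem memℓp_shift (f : H) (k : ℤ) : Memℓp (fun g => f (g + k)) 2 :=
  (lp.memℓp f).comp_equiv_s19 (by norm_num) (Equiv.addRight k)

theorem norm_shift (f : H) (k : ℤ) : ‖(⟨fun g => f (g + k), memℓp_shift f k⟩ : H)‖ = ‖f‖ := by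
  have h : HasSum (fun g : ℤ => ‖f (g + k)‖ ^ 2) (‖f‖ ^ 2) :=
    (Equiv.addRight k).hasSum_iff (f := fun g => ‖f g‖ ^ 2) |>.2 (lp.hasSum_norm_sq f)
  exact (sq_eq_sq₀ (norm_nonneg _) (norm_nonneg _)).1 <|
    (lp.hasSum_norm_sq ⟨fun g => f (g + k), memℓp_shift f k⟩).unique h

def shift : H ≃ₗᵢ[ℂ] H where
  toFun f := ⟨fun g => f (g + 1), memℓp_shift f 1⟩
  invFun f := ⟨fun g => f (g + -1), memℓp_shift f (-1)⟩
  map_add' f g := rfl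
  map_smul' c f := rfl
  left_inv f := by ext; simp
  right_inv f := by ext; simp
  norm_map' f := norm_shift f 1

@[simp] theorem shift_apply (f : H) (g : ℤ) : shift f g = f (g + 1) := rfl

@[simp] theorem shift_symm_apply (f : H) (g : ℤ) : shift.symm f g = f (g - 1) := rfl

theorem memℓp_mul (f v : H) : Memℓp (fun i => f i * v i) 2 :=
  ((lp.memℓp v).norm.const_mul ‖f‖).mono fun i => by
    rw [norm_mul]
    exact mul_le_mul_of_nonneg_right (lp.norm_apply_le_norm two_ne_zero f i) (norm_nonneg _)

def pmul (f v : H) : H := ⟨fun i => f i * v i, memℓp_mul f v⟩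

@[simp] theorem pmul_apply (f v : H) (i : ℤ) : pmul f v i = f i * v i := rfl

theorem pmul_comm (f v : H) : pmul f v = pmul v f := by ext i; exact mul_comm _ _

theorem norm_pmul_le (f v : H) : ‖pmul f v‖ ≤ ‖f‖ * ‖v‖ := by
  calc ‖pmul f v‖ ≤ ‖(‖f‖ : ℂ) • v‖ := lp.norm_mono two_ne_zero fun i => by
        rw [pmul_apply, lp.coeFn_smul, Pi.smul_apply, norm_mul, norm_smul, Complex.norm_real,
          Real.norm_of_nonneg (norm_nonneg _)]
        exact mul_le_mul_of_nonneg_right (lp.norm_apply_le_norm two_ne_zero f i) (norm_nonneg _)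
    _ = ‖f‖ * ‖v‖ := by rw [norm_smul, Complex.norm_real, Real.norm_of_nonneg (norm_nonneg _)]

def pmulL : H →L[ℝ] H →L[ℝ] H :=
  LinearMap.mkContinuous₂
    (LinearMap.mk₂ ℝ pmul
      (fun f f' v => by ext i; simp [add_mul])
      (fun c f v => by ext i; simp [mul_assoc])
      (fun f v v' => by ext i; simp [mul_add])
      (fun c f v => by
        ext i
        simp only [pmul_apply, lp.coeFn_smul, Pi.smul_apply, Complex.real_smul]
        ring))
    1 (fun f v => by simpa using norm_pmul_le f v)

@[simp] theorem pmulL_apply (f v : H) : pmulL f v = pmul f v := rfl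

def cubic (v : H) : H := pmul (pmul (star v) v) v

theorem cubic_apply (v : H) (i : ℤ) : cubic v i = (‖v i‖ : ℂ) ^ 2 * v i := by
  simp [cubic, lp.star_apply, Complex.conj_mul']

theorem norm_sq_apply_le (v : H) (g : ℤ) : ‖v g‖ ^ 2 ≤ 2 * ‖v‖ * ‖shift v - v‖ := by
  set d := shift v - v
  have hd (h : ℤ) : d h = v (h + 1) - v h := by simp [d]
  have h22 : (2 : ENNReal).toReal.HolderConjugate (2 : ENNReal).toReal := by
    simpa using Real.HolderConjugate.two_two
  obtain ⟨hsum₁, hle₁⟩ := lp.tsum_mul_le_mul_norm h22 d (shift v)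
  obtain ⟨hsum₂, hle₂⟩ := lp.tsum_mul_le_mul_norm h22 d v
  have hstep (h : ℤ) : ‖v h‖ ^ 2 - ‖v (h + 1)‖ ^ 2 ≤ ‖d h‖ * ‖shift v h‖ + ‖d h‖ * ‖v h‖ := by
    have : ‖v h‖ - ‖v (h + 1)‖ ≤ ‖d h‖ := by
      rw [hd, norm_sub_rev]; exact norm_sub_norm_le _ _
    rw [shift_apply]
    nlinarith [norm_nonneg (v h), norm_nonneg (v (h + 1))]
  calc ‖v g‖ ^ 2 ≤ ∑' h, (‖d h‖ * ‖shift v h‖ + ‖d h‖ * ‖v h‖) :=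
        le_tsum_of_sub_add_one_le (lp.hasSum_norm_sq v).summable (hsum₁.add hsum₂)
          (fun h => by positivity) hstep g
    _ = ∑' h, ‖d h‖ * ‖shift v h‖ + ∑' h, ‖d h‖ * ‖v h‖ := hsum₁.tsum_add hsum₂
    _ ≤ ‖d‖ * ‖shift v‖ + ‖d‖ * ‖v‖ := add_le_add hle₁ hle₂
    _ = 2 * ‖v‖ * ‖d‖ := by rw [LinearIsometryEquiv.norm_map]; ring

theorem norm_pmul_self_sq_le (v : H) : ‖pmul v v‖ ^ 2 ≤ 2 * ‖v‖ ^ 3 * ‖shift v - v‖ := by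
  have hle (i : ℤ) : ‖pmul v v i‖ ^ 2 ≤ 2 * ‖v‖ * ‖shift v - v‖ * ‖v i‖ ^ 2 := by
    rw [pmul_apply, norm_mul, mul_pow]
    exact mul_le_mul_of_nonneg_right (norm_sq_apply_le v i) (by positivity)
  calc ‖pmul v v‖ ^ 2 ≤ 2 * ‖v‖ * ‖shift v - v‖ * ‖v‖ ^ 2 :=
        hasSum_le hle (lp.hasSum_norm_sq _) ((lp.hasSum_norm_sq v).mul_left _)
    _ = 2 * ‖v‖ ^ 3 * ‖shift v - v‖ := by ring

def dnlsField (ν : ℝ) (v : H) : H := shift v + shift.symm v - (2 : ℂ) • v + (ν : ℂ) • cubic v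

theorem dnlsField_apply (ν : ℝ) (v : H) (g : ℤ) :
    dnlsField ν v g = v (g + 1) - 2 * v g + v (g - 1) + ν * (‖v g‖ : ℂ) ^ 2 * v g := by
  simp only [dnlsField, lp.coeFn_add, lp.coeFn_sub, lp.coeFn_smul, Pi.add_apply, Pi.sub_apply,
    Pi.smul_apply, smul_eq_mul, shift_apply, shift_symm_apply, cubic_apply]
  ring

/-- The Hamiltonian `H(u)` of the paper (here `H` names the space `ℓ²(ℤ)`). -/
def energy (ν : ℝ) (v : H) : ℝ := ‖shift v - v‖ ^ 2 / 2 - ν / 4 * ‖pmul v v‖ ^ 2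

theorem inner_shift_sub_self (v w : H) :
    ⟪shift v - v, shift w - w⟫_ℂ = ⟪(2 : ℂ) • v - shift v - shift.symm v, w⟫_ℂ := by
  have h : ⟪v, shift w⟫_ℂ = ⟪shift.symm v, w⟫_ℂ := by
    rw [← shift.inner_map_map (shift.symm v) w, LinearIsometryEquiv.apply_symm_apply]
  simp only [inner_sub_left, inner_sub_right, inner_smul_left, LinearIsometryEquiv.inner_map_map,
    h, map_ofNat]
  ring

theorem inner_pmul_self_pmul (v w : H) : ⟪pmul v v, pmul v w⟫_ℂ = ⟪cubic v, w⟫_ℂ := by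
  simp only [lp.inner_eq_tsum]
  refine tsum_congr fun i => ?_
  simp only [pmul_apply, RCLike.inner_apply, map_mul, cubic, lp.star_apply, RCLike.star_def,
    RingHomCompTriple.comp_apply, RingHom.id_apply]
  ring

theorem im_inner_dnlsField (ν : ℝ) (v : H) : (⟪v, dnlsField ν v⟫_ℂ).im = 0 := by
  have hS : ⟪v, shift.symm v⟫_ℂ = conj ⟪v, shift v⟫_ℂ := by
    rw [inner_conj_symm, ← shift.inner_map_map, LinearIsometryEquiv.apply_symm_apply]
  have hQ : ⟪v, cubic v⟫_ℂ = conj ⟪pmul v v, pmul v v⟫_ℂ := by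
    rw [inner_pmul_self_pmul, inner_conj_symm]
  have hv : (⟪v, v⟫_ℂ).im = 0 := inner_self_im (𝕜 := ℂ) v
  have hvv : (⟪pmul v v, pmul v v⟫_ℂ).im = 0 := inner_self_im (𝕜 := ℂ) _
  simp only [dnlsField, inner_add_right, inner_sub_right, inner_smul_right, hS, hQ,
    Complex.add_im, Complex.sub_im, Complex.mul_im, Complex.conj_im, Complex.conj_re,
    hv, hvv, Complex.ofReal_im, Complex.ofReal_re, Complex.re_ofNat, Complex.im_ofNat]
  ring

theorem hasDerivAt_shift {u : ℝ → H} {u' : H} {t : ℝ} (hu : HasDerivAt u u' t) :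
    HasDerivAt (fun s => shift (u s)) (shift u') t :=
  ((shift : H →L[ℂ] H).restrictScalars ℝ).hasFDerivAt.comp_hasDerivAt t hu

theorem hasDerivAt_energy (ν : ℝ) {u : ℝ → H} {u' : H} {t : ℝ} (hu : HasDerivAt u u' t) :
    HasDerivAt (fun s => energy ν (u s)) (-(⟪dnlsField ν (u t), u'⟫_ℂ).re) t := by
  have hkin := ((hasDerivAt_shift hu).sub hu).norm_sq_complex.div_const 2
  have hpot :=
    (pmulL.hasDerivAt_of_bilinear (fun _ => hu) (fun _ => hu)).norm_sq_complex.const_mul (ν / 4)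
  refine (hkin.sub hpot).congr_deriv ?_
  rw [Pi.sub_apply, inner_shift_sub_self]
  simp only [pmulL_apply, pmul_comm u' (u t), inner_add_right, inner_pmul_self_pmul, dnlsField,
    inner_add_left, inner_sub_left, inner_smul_left, Complex.add_re, Complex.sub_re,
    Complex.mul_re, Complex.conj_ofReal, Complex.ofReal_re, Complex.ofReal_im, map_ofNat,
    Complex.re_ofNat, Complex.im_ofNat]
  ring

theorem norm_conserved {ν : ℝ} {u u' : ℝ → H} (hu : ∀ t, HasDerivAt u (u' t) t)
    (hsol : ∀ t, u' t = -Complex.I • dnlsField ν (u t)) (t : ℝ) : ‖u t‖ = ‖u 0‖ := by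
  have hmass (s : ℝ) : HasDerivAt (‖u ·‖ ^ 2) 0 s := by
    convert (hu s).norm_sq_complex using 1
    rw [hsol, inner_smul_right]
    simp [Complex.mul_re, im_inner_dnlsField]
  exact (sq_eq_sq₀ (norm_nonneg _) (norm_nonneg _)).1 <|
    is_const_of_deriv_eq_zero (fun s => (hmass s).differentiableAt) (fun s => (hmass s).deriv) t 0

theorem energy_conserved {ν : ℝ} {u u' : ℝ → H} (hu : ∀ t, HasDerivAt u (u' t) t)
    (hsol : ∀ t, u' t = -Complex.I • dnlsField ν (u t)) (t : ℝ) :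
    energy ν (u t) = energy ν (u 0) := by
  have hE (s : ℝ) : HasDerivAt (fun s => energy ν (u s)) 0 s := by
    convert hasDerivAt_energy ν (hu s) using 1
    rw [hsol, inner_smul_right, inner_self_eq_norm_sq_to_K]
    simp [← Complex.ofReal_pow]
  exact is_const_of_deriv_eq_zero (fun s => (hE s).differentiableAt) (fun s => (hE s).deriv) t 0

theorem sqrt_tsum_norm_sub_sq (v : H) : √(∑' g, ‖v (g + 1) - v g‖ ^ 2) = ‖shift v - v‖ := by
  simpa using lp.sqrt_tsum_norm_sq (shift v - v)

theorem eq_neg_I_smul_dnlsField {ν : ℝ} {v w : H}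
    (h : ∀ g, Complex.I * w g = v (g + 1) - 2 * v g + v (g - 1) + ν * (‖v g‖ : ℂ) ^ 2 * v g) :
    w = -Complex.I • dnlsField ν v := by
  ext g
  rw [lp.coeFn_smul, Pi.smul_apply, smul_eq_mul, dnlsField_apply, ← h, ← mul_assoc, neg_mul,
    Complex.I_mul_I, neg_neg, one_mul]

theorem norm_shift_sub_le_of_energy_eq {ν : ℝ} (hν : |ν| ≤ 1) {v w : H} (hm : ‖v‖ = ‖w‖)
    (hE : energy ν v = energy ν w) : ‖shift v - v‖ ≤ 2 * (‖shift w - w‖ + ‖w‖ ^ 3) := by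
  have hv := norm_pmul_self_sq_le v
  have hw := norm_pmul_self_sq_le w
  rw [hm] at hv
  have hpot : ν * (‖pmul v v‖ ^ 2 - ‖pmul w w‖ ^ 2) ≤ ‖pmul v v‖ ^ 2 + ‖pmul w w‖ ^ 2 := by
    obtain ⟨hν₁, hν₂⟩ := abs_le.1 hν
    nlinarith [mul_nonneg (sub_nonneg.2 hν₂) (sq_nonneg ‖pmul v v‖),
      mul_nonneg (neg_le_iff_add_nonneg.1 hν₁) (sq_nonneg ‖pmul w w‖)]
  unfold energy at hE
  apply le_two_mul_add_of_sq_le (norm_nonneg _) (norm_nonneg _) (by positivity)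
  linarith

end DNLS

/-- Uniform `H¹` bound for DNLS: there is a universal constant `C > 0` such that every
`C¹` solution of `i u' = Δu + ν|u|²u` (with `ν = ±1`) satisfies, for all `t`,
`‖u(t)‖_{Ḣ¹(ℤ)} ≤ C (‖u(0)‖_{Ḣ¹(ℤ)} + ‖u(0)‖³_{ℓ²(ℤ)})`. -/
theorem DNLS_uniform_H1_bound :
    ∃ C > (0 : ℝ), ∀ (ν : ℝ), ν = 1 ∨ ν = -1 → ∀ (u u' : ℝ → H),
      Continuous u' → (∀ t, HasDerivAt u (u' t) t) →
      (∀ (t : ℝ) (g : ℤ),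
        Complex.I * (u' t : ℤ → ℂ) g =
          ((u t : ℤ → ℂ) (g + 1) - 2 * (u t : ℤ → ℂ) g + (u t : ℤ → ℂ) (g - 1)) +
            ν * (‖(u t : ℤ → ℂ) g‖ : ℂ) ^ 2 * (u t : ℤ → ℂ) g) →
      ∀ t : ℝ,
        Real.sqrt (∑' g : ℤ, ‖(u t : ℤ → ℂ) (g + 1) - (u t : ℤ → ℂ) g‖ ^ 2)
          ≤ C * (Real.sqrt (∑' g : ℤ, ‖(u 0 : ℤ → ℂ) (g + 1) - (u 0 : ℤ → ℂ) g‖ ^ 2)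
              + Real.sqrt (∑' g : ℤ, ‖(u 0 : ℤ → ℂ) g‖ ^ 2) ^ 3) := by
  refine ⟨2, two_pos, fun ν hν u u' _ hu heq t => ?_⟩
  have hsol (s : ℝ) : u' s = -Complex.I • DNLS.dnlsField ν (u s) :=
    DNLS.eq_neg_I_smul_dnlsField (heq s)
  have hν' : |ν| ≤ 1 := by rcases hν with rfl | rfl <;> norm_num
  rw [DNLS.sqrt_tsum_norm_sub_sq, DNLS.sqrt_tsum_norm_sub_sq, lp.sqrt_tsum_norm_sq]
  exact DNLS.norm_shift_sub_le_of_energy_eq hν' (DNLS.norm_conserved hu hsol t)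
    (DNLS.energy_conserved hu hsol t)
end
end
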